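/- Let K(x,y) = β/x on {x > 0}, and let φ satisfy cos φ = (y² − x²)/(x² + y²), sin φ = 2xy/(x² + y²). Then ρ(x,y) = β/x satisfies ∂ρ/∂x = ∂/∂x(K cos φ) − ∂/∂y(K sin φ) and ∂ρ/∂y = −∂/∂x(K sin φ) − ∂/∂y(K cos φ); hence K = ρ. -/

import Mathlib

/-!
On the half-plane, `K cos φ` and `K sin φ` coincide with rational functions of `(x, y)`, so
near every point their partial derivatives are those of the rational functions. With
`r = x² + y²`, the first identity becomes `x⁴ - 4x²y² - y⁴ - 2x²(x² - y²) = -r²`; in the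
second, `∂ₓ(K sin φ)` and `∂ᵧ(K cos φ)` are `∓4βxy / r²` and cancel, while `∂ᵧ(β / x) = 0`.
-/

noncomputable def pdx (f : ℝ × ℝ → ℝ) (p : ℝ × ℝ) : ℝ := fderiv ℝ f p (1, 0)
noncomputable def pdy (f : ℝ × ℝ → ℝ) (p : ℝ × ℝ) : ℝ := fderiv ℝ f p (0, 1)

open Filter Topology

section PartialDerivatives

variable {f g : ℝ × ℝ → ℝ} {x y a : ℝ}

lemma pdx_eq_of_hasDerivAt (hf : DifferentiableAt ℝ f (x, y))
    (h : HasDerivAt (fun t => f (t, y)) a x) : pdx f (x, y) = a := by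
  have hline : HasDerivAt (fun t : ℝ => (t, y)) (1, 0) x :=
    (hasDerivAt_id x).prodMk (hasDerivAt_const x y)
  exact (hf.hasFDerivAt.comp_hasDerivAt x hline).unique h

lemma pdy_eq_of_hasDerivAt (hf : DifferentiableAt ℝ f (x, y))
    (h : HasDerivAt (fun t => f (x, t)) a y) : pdy f (x, y) = a := by
  have hline : HasDerivAt (fun t : ℝ => (x, t)) (0, 1) y :=
    (hasDerivAt_const y x).prodMk (hasDerivAt_id y)
  exact (hf.hasFDerivAt.comp_hasDerivAt y hline).unique h

lemma pdx_congr {p : ℝ × ℝ} (h : f =ᶠ[𝓝 p] g) : pdx f p = pdx g p := by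
  rw [pdx, pdx, h.fderiv_eq]

lemma pdy_congr {p : ℝ × ℝ} (h : f =ᶠ[𝓝 p] g) : pdy f p = pdy g p := by
  rw [pdy, pdy, h.fderiv_eq]

end PartialDerivatives

lemma eventuallyEq_of_eqOn_halfPlane {f g : ℝ × ℝ → ℝ} {p : ℝ × ℝ} (hp : 0 < p.1)
    (h : ∀ q : ℝ × ℝ, 0 < q.1 → f q = g q) : f =ᶠ[𝓝 p] g := by
  filter_upwards [(isOpen_lt continuous_const continuous_fst).mem_nhds hp] with q hq
  exact h q hq

-- `K cos φ` and `K sin φ` for `K = β / x`.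
noncomputable def kCos (β : ℝ) (q : ℝ × ℝ) : ℝ :=
  β * (q.2 ^ 2 - q.1 ^ 2) / (q.1 * (q.1 ^ 2 + q.2 ^ 2))
noncomputable def kSin (β : ℝ) (q : ℝ × ℝ) : ℝ :=
  2 * β * q.2 / (q.1 ^ 2 + q.2 ^ 2)

section RationalParts

variable (β : ℝ) {x : ℝ} (y : ℝ)

lemma differentiableAt_kCos (hx : x ≠ 0) : DifferentiableAt ℝ (kCos β) (x, y) := by
  have : x * (x ^ 2 + y ^ 2) ≠ 0 := by positivity
  unfold kCos
  fun_prop (disch := exact this)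

lemma differentiableAt_kSin (hx : x ≠ 0) : DifferentiableAt ℝ (kSin β) (x, y) := by
  have : x ^ 2 + y ^ 2 ≠ 0 := by positivity
  unfold kSin
  fun_prop (disch := exact this)

lemma pdx_kCos (hx : x ≠ 0) :
    pdx (kCos β) (x, y) =
      β * (x ^ 4 - 4 * x ^ 2 * y ^ 2 - y ^ 4) / (x ^ 2 * (x ^ 2 + y ^ 2) ^ 2) := by
  have hr : x ^ 2 + y ^ 2 ≠ 0 := by positivity
  refine pdx_eq_of_hasDerivAt (differentiableAt_kCos β y hx) ?_
  refine ((((hasDerivAt_pow 2 x).const_sub (y ^ 2)).const_mul β).fun_div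
    ((hasDerivAt_id' x).fun_mul ((hasDerivAt_pow 2 x).add_const (y ^ 2))) (mul_ne_zero hx hr)
    ).congr_deriv ?_
  field_simp
  ring

lemma pdy_kCos (hx : x ≠ 0) :
    pdy (kCos β) (x, y) = 4 * β * x * y / (x ^ 2 + y ^ 2) ^ 2 := by
  have hr : x ^ 2 + y ^ 2 ≠ 0 := by positivity
  refine pdy_eq_of_hasDerivAt (differentiableAt_kCos β y hx) ?_
  refine ((((hasDerivAt_pow 2 y).sub_const (x ^ 2)).const_mul β).fun_div
    (((hasDerivAt_pow 2 y).const_add (x ^ 2)).const_mul x) (mul_ne_zero hx hr)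
    ).congr_deriv ?_
  field_simp
  ring

lemma pdx_kSin (hx : x ≠ 0) :
    pdx (kSin β) (x, y) = -(4 * β * x * y) / (x ^ 2 + y ^ 2) ^ 2 := by
  have hr : x ^ 2 + y ^ 2 ≠ 0 := by positivity
  refine pdx_eq_of_hasDerivAt (differentiableAt_kSin β y hx) ?_
  refine ((hasDerivAt_const x (2 * β * y)).fun_div
    ((hasDerivAt_pow 2 x).add_const (y ^ 2)) hr).congr_deriv ?_
  field_simp
  ring

lemma pdy_kSin (hx : x ≠ 0) :
    pdy (kSin β) (x, y) = 2 * β * (x ^ 2 - y ^ 2) / (x ^ 2 + y ^ 2) ^ 2 := by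
  have hr : x ^ 2 + y ^ 2 ≠ 0 := by positivity
  refine pdy_eq_of_hasDerivAt (differentiableAt_kSin β y hx) ?_
  refine (((hasDerivAt_id' y).const_mul (2 * β)).fun_div
    ((hasDerivAt_pow 2 y).const_add (x ^ 2)) hr).congr_deriv ?_
  field_simp
  ring

lemma differentiableAt_const_div_fst (hx : x ≠ 0) :
    DifferentiableAt ℝ (fun q : ℝ × ℝ => β / q.1) (x, y) := by
  fun_prop (disch := exact hx)

lemma pdx_const_div_fst (hx : x ≠ 0) :
    pdx (fun q : ℝ × ℝ => β / q.1) (x, y) = -β / x ^ 2 := by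
  refine pdx_eq_of_hasDerivAt (differentiableAt_const_div_fst β y hx) ?_
  refine ((hasDerivAt_inv hx).const_mul β).congr_deriv ?_
  ring

lemma pdy_const_div_fst (hx : x ≠ 0) : pdy (fun q : ℝ × ℝ => β / q.1) (x, y) = 0 :=
  pdy_eq_of_hasDerivAt (differentiableAt_const_div_fst β y hx) (hasDerivAt_const y (β / x))

end RationalParts

theorem stmt18 (β : ℝ) (φ : ℝ × ℝ → ℝ)
    (hcos : ∀ p : ℝ × ℝ, 0 < p.1 →
      Real.cos (φ p) = (p.2 ^ 2 - p.1 ^ 2) / (p.1 ^ 2 + p.2 ^ 2))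
    (hsin : ∀ p : ℝ × ℝ, 0 < p.1 →
      Real.sin (φ p) = 2 * p.1 * p.2 / (p.1 ^ 2 + p.2 ^ 2)) :
    (∀ p : ℝ × ℝ, 0 < p.1 →
      pdx (fun q : ℝ × ℝ => β / q.1) p =
        pdx (fun q : ℝ × ℝ => (β / q.1) * Real.cos (φ q)) p -
        pdy (fun q : ℝ × ℝ => (β / q.1) * Real.sin (φ q)) p ∧
      pdy (fun q : ℝ × ℝ => β / q.1) p =
        -pdx (fun q : ℝ × ℝ => (β / q.1) * Real.sin (φ q)) p -
        pdy (fun q : ℝ × ℝ => (β / q.1) * Real.cos (φ q)) p) ∧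
    (∀ p : ℝ × ℝ, 0 < p.1 → (β / p.1 : ℝ) = β / p.1) := by
  refine ⟨fun ⟨x, y⟩ hp => ?_, fun _ _ => rfl⟩
  have hK_cos : (fun q : ℝ × ℝ => (β / q.1) * Real.cos (φ q)) =ᶠ[𝓝 (x, y)] kCos β :=
    eventuallyEq_of_eqOn_halfPlane hp fun q hq => by
      rw [hcos q hq, kCos]
      field_simp
  have hK_sin : (fun q : ℝ × ℝ => (β / q.1) * Real.sin (φ q)) =ᶠ[𝓝 (x, y)] kSin β :=
    eventuallyEq_of_eqOn_halfPlane hp fun q hq => by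
      rw [hsin q hq, kSin]
      field_simp
  have hx : x ≠ 0 := hp.ne'
  have hr : x ^ 2 + y ^ 2 ≠ 0 := by positivity
  rw [pdx_congr hK_cos, pdy_congr hK_cos, pdx_congr hK_sin, pdy_congr hK_sin,
    pdx_kCos β y hx, pdy_kCos β y hx, pdx_kSin β y hx, pdy_kSin β y hx,
    pdx_const_div_fst β y hx, pdy_const_div_fst β y hx]
  constructor
  · field_simp
    ring
  · ring
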